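/- (Countable sum theorem for covering dimension) Let $X$ be a normal topological space with $X = \bigcup_{i=1}^\infty X_i$, where each $X_i$ is a closed subspace of $X$ with covering dimension $\dim X_i \le n$. Then $\dim X \le n$. -/

import Mathlib

/-!
The order of an open cover can be lowered to `n` on `X₀`, then on `X₁`, and so on, each time
shrinking it with closures. Order only decreases under shrinking, so the intersections of the
successive shrinkings form a closed cover (it covers by finiteness of the index set) of order at
most `n` everywhere. Swelling this closed cover in a normal space yields an open refinement of the
original cover with the same nerve, hence also of order at most `n`.
-/

/-- `CoveringDimLE X n`: every finite open cover of `X` has a finite open refinement in which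
each point lies in at most `n + 1` sets (Lebesgue covering dimension `≤ n`). -/
def CoveringDimLE (X : Type*) [TopologicalSpace X] (n : ℕ) : Prop :=
  ∀ (ι : Type) (U : ι → Set X), Finite ι → (∀ i, IsOpen (U i)) → (⋃ i, U i) = Set.univ →
    ∃ (κ : Type) (V : κ → Set X), Finite κ ∧ (∀ k, IsOpen (V k)) ∧
      (⋃ k, V k) = Set.univ ∧ (∀ k, ∃ i, V k ⊆ U i) ∧
      ∀ x : X, Nat.card {k : κ // x ∈ V k} ≤ n + 1

open Set Filter

theorem iUnion_iInter_eq_univ_of_antitone {α ι : Type*} [Finite ι] {W : ℕ → ι → Set α}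
    (hW : ∀ s, Antitone (W · s)) (hc : ∀ i, ⋃ s, W i s = univ) : ⋃ s, ⋂ i, W i s = univ := by
  refine eq_univ_of_forall fun x => ?_
  by_contra hx
  simp only [mem_iUnion, mem_iInter, not_exists, not_forall] at hx
  have hleave : ∀ᶠ i in atTop, ∀ s, x ∉ W i s := eventually_all.2 fun s =>
    let ⟨i, hi⟩ := hx s
    eventually_atTop.2 ⟨i, fun _ hj hxj => hi (hW s hj hxj)⟩
  obtain ⟨i, hi⟩ := hleave.exists
  obtain ⟨s, hs⟩ := mem_iUnion.1 ((hc i).symm ▸ mem_univ x)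
  exact hi s hs

section CoveringDimension

variable {X : Type*} [TopologicalSpace X] {n : ℕ}

theorem isClosed_iInter_of_closure_succ_subset {A : ℕ → Set X}
    (h : ∀ i, closure (A (i + 1)) ⊆ A i) : IsClosed (⋂ i, A i) :=
  isClosed_of_closure_subset <| subset_iInter fun i =>
    (closure_mono (iInter_subset A (i + 1))).trans (h i)

theorem exists_closed_swelling_at [NormalSpace X] {ι : Type*} [Finite ι] {F K : ι → Set X}
    (hK : ∀ s, IsClosed (K s)) (hKF : ∀ x, ∃ y, ∀ s, x ∈ K s → y ∈ F s) (a : ι) {U : Set X}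
    (hU : IsOpen U) (haU : K a ⊆ U) :
    ∃ K' : ι → Set X, (∀ s, IsClosed (K' s)) ∧ (∀ s ≠ a, K' s = K s) ∧ K a ⊆ interior (K' a) ∧
      K' a ⊆ U ∧ ∀ x, ∃ y, ∀ s, x ∈ K' s → y ∈ F s := by
  classical
  -- Keeping the new `K a` off `D` is exactly what keeps the nerve of `K` inside that of `F`.
  set D : Set X := ⋃ (T : Set ι) (_ : F a ∩ ⋂ t ∈ T, F t = ∅), ⋂ t ∈ T, K t
  have hDc : IsClosed D :=
    (toFinite _).isClosed_biUnion fun T _ => isClosed_biInter fun t _ => hK t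
  have hKaD : K a ⊆ U ∩ Dᶜ := by
    refine fun x hx => ⟨haU hx, fun hxD => ?_⟩
    obtain ⟨T, hT, hxT⟩ := mem_iUnion₂.1 hxD
    obtain ⟨y, hy⟩ := hKF x
    exact (hT.subset ⟨hy a hx, mem_iInter₂.2 fun t ht => hy t (mem_iInter₂.1 hxT t ht)⟩ : y ∈ ∅)
  obtain ⟨V, hVo, hKV, hVcl⟩ :=
    normal_exists_closure_subset (hK a) (hU.inter hDc.isOpen_compl) hKaD
  refine ⟨Function.update K a (closure V), fun s => ?_, fun s hs => Function.update_of_ne hs _ _,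
    ?_, ?_, fun x => ?_⟩
  · rcases eq_or_ne s a with rfl | hs
    · simp
    · simpa [hs] using hK s
  · rw [Function.update_self]
    exact hKV.trans (hVo.subset_interior_iff.2 subset_closure)
  · rw [Function.update_self]
    exact hVcl.trans inter_subset_left
  by_cases hx : x ∈ closure V
  · have hmeet : (F a ∩ ⋂ t ∈ {t | x ∈ K t}, F t).Nonempty := by
      refine nonempty_iff_ne_empty.2 fun h => (hVcl hx).2 ?_
      exact mem_iUnion₂.2 ⟨{t | x ∈ K t}, h, mem_iInter₂.2 fun t ht => ht⟩
    obtain ⟨y, hya, hyK⟩ := hmeet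
    refine ⟨y, fun s hs => ?_⟩
    rcases eq_or_ne s a with rfl | hsa
    · exact hya
    · rw [Function.update_of_ne hsa] at hs
      exact mem_iInter₂.1 hyK s hs
  · obtain ⟨y, hy⟩ := hKF x
    refine ⟨y, fun s hs => hy s ?_⟩
    rcases eq_or_ne s a with rfl | hsa
    · rw [Function.update_self] at hs
      exact absurd hs hx
    · rwa [Function.update_of_ne hsa] at hs

theorem exists_open_swelling [NormalSpace X] {ι : Type*} [Finite ι] {F U : ι → Set X}
    (hF : ∀ s, IsClosed (F s)) (hU : ∀ s, IsOpen (U s)) (hFU : ∀ s, F s ⊆ U s) :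
    ∃ G : ι → Set X, (∀ s, IsOpen (G s)) ∧ (∀ s, F s ⊆ G s) ∧ (∀ s, G s ⊆ U s) ∧
      ∀ x, ∃ y, ∀ s, x ∈ G s → y ∈ F s := by
  classical
  have : Fintype ι := Fintype.ofFinite ι
  suffices h : ∀ P : Finset ι, ∃ K : ι → Set X, (∀ s, IsClosed (K s)) ∧ (∀ s, F s ⊆ K s) ∧
      (∀ s, K s ⊆ U s) ∧ (∀ s ∈ P, F s ⊆ interior (K s)) ∧ ∀ x, ∃ y, ∀ s, x ∈ K s → y ∈ F s by
    obtain ⟨K, -, -, hKU, hFK, hKF⟩ := h Finset.univ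
    exact ⟨fun s => interior (K s), fun s => isOpen_interior, fun s => hFK s (Finset.mem_univ s),
      fun s => interior_subset.trans (hKU s),
      fun x => (hKF x).imp fun y hy s hs => hy s (interior_subset hs)⟩
  intro P
  induction P using Finset.induction_on with
  | empty => exact ⟨F, hF, fun s => subset_rfl, hFU, by simp, fun x => ⟨x, fun s hs => hs⟩⟩
  | @insert a P _ ih =>
    obtain ⟨K, hK, hFK, hKU, hPK, hKF⟩ := ih
    obtain ⟨K', hK', hK'K, haK', hK'U, hK'F⟩ := exists_closed_swelling_at hK hKF a (hU a) (hKU a)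
    refine ⟨K', hK', fun s => ?_, fun s => ?_, fun s hs => ?_, hK'F⟩ <;>
      rcases eq_or_ne s a with rfl | hsa
    · exact (hFK s).trans (haK'.trans interior_subset)
    · exact hK'K s hsa ▸ hFK s
    · exact hK'U
    · exact hK'K s hsa ▸ hKU s
    · exact (hFK s).trans haK'
    · exact hK'K s hsa ▸ hPK s ((Finset.mem_insert.1 hs).resolve_left hsa)

theorem CoveringDimLE.exists_shrinking (hX : CoveringDimLE X n) {ι : Type} [Finite ι]
    {U : ι → Set X} (hUo : ∀ s, IsOpen (U s)) (hUc : ⋃ s, U s = univ) :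
    ∃ V : ι → Set X, (∀ s, IsOpen (V s)) ∧ ⋃ s, V s = univ ∧ (∀ s, V s ⊆ U s) ∧
      ∀ x, {s | x ∈ V s}.ncard ≤ n + 1 := by
  obtain ⟨κ, W, hκ, hWo, hWc, hWU, hWord⟩ := hX ι U ‹_› hUo hUc
  choose φ hφ using hWU
  refine ⟨fun s => ⋃ (k) (_ : φ k = s), W k, fun s => isOpen_biUnion fun k _ => hWo k, ?_,
    fun s => iUnion₂_subset fun k hk => hk ▸ hφ k, fun x => ?_⟩
  · simpa [iUnion_comm (ι := ι)] using hWc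
  · have hsub : {s | x ∈ ⋃ (k) (_ : φ k = s), W k} ⊆ φ '' {k | x ∈ W k} := by
      intro s hs
      obtain ⟨k, rfl, hk⟩ := by simpa using hs
      exact mem_image_of_mem φ hk
    calc {s | x ∈ ⋃ (k) (_ : φ k = s), W k}.ncard ≤ (φ '' {k | x ∈ W k}).ncard :=
          ncard_le_ncard hsub (toFinite _)
      _ ≤ Nat.card {k // x ∈ W k} := ncard_image_le (toFinite _)
      _ ≤ n + 1 := hWord x

theorem CoveringDimLE.exists_open_shrinking_of_subset {C : Set X} (hC : CoveringDimLE C n)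
    {ι : Type} [Finite ι] {W : ι → Set X} (hWo : ∀ s, IsOpen (W s)) (hCW : C ⊆ ⋃ s, W s) :
    ∃ G : ι → Set X, (∀ s, IsOpen (G s)) ∧ (∀ s, G s ⊆ W s) ∧ C ⊆ ⋃ s, G s ∧
      ∀ x ∈ C, {s | x ∈ G s}.ncard ≤ n + 1 := by
  have hcov : ⋃ s, ((↑) : C → X) ⁻¹' W s = univ := by
    rw [← preimage_iUnion, preimage_eq_univ_iff, Subtype.range_coe]
    exact hCW
  obtain ⟨V, hVo, hVc, hVW, hVord⟩ :=
    hC.exists_shrinking (fun s => (hWo s).preimage continuous_subtype_val) hcov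
  choose G₀ hG₀o hG₀V using fun s => isOpen_induced_iff.mp (hVo s)
  have hmem : ∀ x (hx : x ∈ C) s, x ∈ G₀ s ∩ W s ↔ (⟨x, hx⟩ : C) ∈ V s := fun x hx s =>
    ⟨fun h => hG₀V s ▸ h.1, fun h => ⟨by rw [← hG₀V s] at h; exact h, hVW s h⟩⟩
  refine ⟨fun s => G₀ s ∩ W s, fun s => (hG₀o s).inter (hWo s), fun s => inter_subset_right,
    fun x hx => ?_, fun x hx => ?_⟩
  · obtain ⟨s, hs⟩ := mem_iUnion.mp (hVc.symm ▸ mem_univ (⟨x, hx⟩ : C))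
    exact mem_iUnion.mpr ⟨s, (hmem x hx s).mpr hs⟩
  · simpa only [hmem x hx] using hVord ⟨x, hx⟩

theorem exists_closure_shrinking_order_le_on [NormalSpace X] {C : Set X} (hCc : IsClosed C)
    (hC : CoveringDimLE C n) {ι : Type} [Finite ι] {W : ι → Set X} (hWo : ∀ s, IsOpen (W s))
    (hWc : ⋃ s, W s = univ) :
    ∃ W' : ι → Set X, (∀ s, IsOpen (W' s)) ∧ ⋃ s, W' s = univ ∧ (∀ s, closure (W' s) ⊆ W s) ∧
      ∀ x ∈ C, {s | x ∈ W' s}.ncard ≤ n + 1 := by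
  obtain ⟨G, hGo, hGW, hCG, hGord⟩ :=
    hC.exists_open_shrinking_of_subset hWo (hWc.symm ▸ subset_univ C)
  -- Off `C` nothing needs to change; on `C`, the sets `W s \ C` are invisible.
  set W₂ : ι → Set X := fun s => G s ∪ (W s \ C)
  have hW₂W : ∀ s, W₂ s ⊆ W s := fun s => union_subset (hGW s) sdiff_subset
  have hW₂c : ⋃ s, W₂ s = univ := by
    refine eq_univ_of_forall fun x => ?_
    by_cases hx : x ∈ C
    · obtain ⟨s, hs⟩ := mem_iUnion.mp (hCG hx)
      exact mem_iUnion.mpr ⟨s, Or.inl hs⟩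
    · obtain ⟨s, hs⟩ := mem_iUnion.mp (hWc.symm ▸ mem_univ x)
      exact mem_iUnion.mpr ⟨s, Or.inr ⟨hs, hx⟩⟩
  obtain ⟨W', hW'c, hW'o, hW'W₂⟩ := exists_iUnion_eq_closure_subset
    (fun s => (hGo s).union ((hWo s).sdiff hCc)) (fun x => toFinite _) hW₂c
  refine ⟨W', hW'o, hW'c, fun s => (hW'W₂ s).trans (hW₂W s), fun x hx => ?_⟩
  have hsub : {s | x ∈ W' s} ⊆ {s | x ∈ G s} := fun s hs =>
    ((hW'W₂ s) (subset_closure hs)).resolve_right fun h => h.2 hx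
  exact (ncard_le_ncard hsub (toFinite _)).trans (hGord x hx)

theorem exists_seq_closure_shrinking [NormalSpace X] {Xs : ℕ → Set X}
    (hXs : ∀ i, IsClosed (Xs i)) (hdim : ∀ i, CoveringDimLE (Xs i) n) {ι : Type} [Finite ι]
    {U : ι → Set X} (hUo : ∀ s, IsOpen (U s)) (hUc : ⋃ s, U s = univ) :
    ∃ W : ℕ → ι → Set X, W 0 = U ∧ (∀ i s, IsOpen (W i s)) ∧ (∀ i, ⋃ s, W i s = univ) ∧
      (∀ i s, closure (W (i + 1) s) ⊆ W i s) ∧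
      ∀ i, ∀ x ∈ Xs i, {s | x ∈ W (i + 1) s}.ncard ≤ n + 1 := by
  choose next hnext_open hnext_cover hnext_closure hnext_order using
    fun i (W : {W : ι → Set X // (∀ s, IsOpen (W s)) ∧ ⋃ s, W s = univ}) =>
      exists_closure_shrinking_order_le_on (hXs i) (hdim i) W.2.1 W.2.2
  let W : ℕ → {W : ι → Set X // (∀ s, IsOpen (W s)) ∧ ⋃ s, W s = univ} := fun i =>
    Nat.rec ⟨U, hUo, hUc⟩ (fun i W => ⟨next i W, hnext_open i W, hnext_cover i W⟩) i
  exact ⟨fun i => (W i).1, rfl, fun i => (W i).2.1, fun i => (W i).2.2,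
    fun i => hnext_closure i (W i), fun i => hnext_order i (W i)⟩

end CoveringDimension

/-- the countable sum theorem for covering dimension. -/
theorem stmt_12 (X : Type*) [TopologicalSpace X] [NormalSpace X] (n : ℕ)
    (Xs : ℕ → Set X) (hclosed : ∀ i, IsClosed (Xs i)) (hcover : (⋃ i, Xs i) = Set.univ)
    (hdim : ∀ i, CoveringDimLE (Xs i) n) :
    CoveringDimLE X n := by
  intro ι U hι hUo hUc
  obtain ⟨W, rfl, -, hWc, hWcl, hWord⟩ := exists_seq_closure_shrinking hclosed hdim hUo hUc
  have hanti : ∀ s, Antitone (W · s) := fun s =>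
    antitone_nat_of_succ_le fun i => subset_closure.trans (hWcl i s)
  obtain ⟨G, hGo, hFG, hGU, hGF⟩ :=
    exists_open_swelling (fun s => isClosed_iInter_of_closure_succ_subset (hWcl · s)) hUo
      (fun s => iInter_subset (W · s) 0)
  refine ⟨ι, G, hι, hGo, ?_, fun s => ⟨s, hGU s⟩, fun x => ?_⟩
  · exact eq_univ_of_univ_subset
      ((iUnion_iInter_eq_univ_of_antitone hanti hWc).symm.subset.trans (iUnion_mono hFG))
  obtain ⟨y, hy⟩ := hGF x
  obtain ⟨i, hi⟩ := mem_iUnion.1 (hcover.symm ▸ mem_univ y)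
  calc Nat.card {k // x ∈ G k} = {s | x ∈ G s}.ncard := Nat.card_coe_set_eq _
    _ ≤ {s | y ∈ W (i + 1) s}.ncard :=
      ncard_le_ncard (fun s hs => mem_iInter.1 (hy s hs) (i + 1)) (toFinite _)
    _ ≤ n + 1 := hWord i y hi
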